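/- arXiv:1611.05080 — 8 statements merged into one kernel-verified Lean document; each statement's English description precedes it below -/
import Mathlib

section
/- Suppose the response set is a finite product 𝓡 = ∏_{n=1}^N 𝓡_n and there exists a function f : 𝓡 → 𝓡 such that for every stimulus s with p(s) > 0 and every r̃ ∈ 𝓡, ∑_{r : f(r) = r̃} P(r|s) = P^ni(r̃|s). Then P(r|s) = P^ni(r|s) for all r and all s with p(s) > 0. (The noise-independent surrogate is never related to the actual responses through a reduced, i.e., deterministic, code unless the responses are already noise independent; this is the second part of Theorem 1.) -/
open scoped BigOperators

/-- The `n`-th coordinate marginal `P_n(x|s)` of a conditional distribution on a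
finite product response set. -/
noncomputable def coordMarginal {S : Type*} {N : ℕ} {R : Fin N → Type*}
    [∀ n, Fintype (R n)] [∀ n, DecidableEq (R n)]
    (P : S → (∀ n, R n) → ℝ) (n : Fin N) (s : S) (x : R n) : ℝ :=
  ∑ r, if r n = x then P s r else 0

/-- The noise-independent surrogate `P^ni(r|s) = ∏_n P_n(r_n|s)`. -/
noncomputable def pNI {S : Type*} {N : ℕ} {R : Fin N → Type*}
    [∀ n, Fintype (R n)] [∀ n, DecidableEq (R n)]
    (P : S → (∀ n, R n) → ℝ) (s : S) (r : ∀ n, R n) : ℝ :=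
  ∏ n, coordMarginal P n s (r n)

/-!
Fix a stimulus and write `Q = P(·|s)`, `Q' = P^ni(·|s)`. Since `f` pushes `Q` forward to `Q'`,
each `Q r` is at most the mass `Q' (f r)` of its fiber, so
`∑ Q log Q ≤ ∑ Q log (Q' ∘ f) = ∑ Q' log Q'`. As `log Q'` is a sum of functions of single
coordinates, and `Q` and `Q'` have the same coordinate marginals, `∑ Q' log Q' = ∑ Q log Q'`.
Hence the Kullback–Leibler divergence of `Q` from `Q'` is `≤ 0`, and Gibbs' inequality forces
`Q = Q'`.
-/

open Finset Real InformationTheory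

lemma mul_klFun_div_eq {p q : ℝ} (h : q = 0 → p = 0) :
    q * klFun (p / q) = p * log p - p * log q + q - p := by
  rcases eq_or_ne q 0 with rfl | hq
  · simp [h rfl]
  rcases eq_or_ne p 0 with rfl | hp
  · simp [klFun_zero]
  rw [klFun_apply, log_div hp hq]
  field_simp

/-- Gibbs' inequality, in its equality case. -/
theorem eq_of_sum_mul_log_le {α : Type*} [Fintype α] {p q : α → ℝ}
    (hp : ∀ a, 0 ≤ p a) (hq : ∀ a, 0 ≤ q a) (habs : ∀ a, q a = 0 → p a = 0)
    (hsum : ∑ a, q a ≤ ∑ a, p a)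
    (hlog : ∑ a, p a * log (p a) ≤ ∑ a, p a * log (q a)) : p = q := by
  have hgap_nonneg : ∀ a ∈ univ, 0 ≤ q a * klFun (p a / q a) :=
    fun a _ ↦ mul_nonneg (hq a) (klFun_nonneg (div_nonneg (hp a) (hq a)))
  have hgap_sum : ∑ a, q a * klFun (p a / q a) = 0 := by
    refine le_antisymm ?_ (sum_nonneg hgap_nonneg)
    simp only [mul_klFun_div_eq (habs _), sum_add_distrib, sum_sub_distrib]
    linarith
  funext a
  have hgap := (sum_eq_zero_iff_of_nonneg hgap_nonneg).mp hgap_sum a (mem_univ a)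
  rcases mul_eq_zero.mp hgap with hqa | hkl
  · rw [hqa, habs a hqa]
  · have hqa : q a ≠ 0 := fun hqa ↦ by simp [hqa, habs a hqa, klFun_zero] at hkl
    rwa [klFun_eq_zero_iff (div_nonneg (hp a) (hq a)), div_eq_one_iff_eq hqa] at hkl

lemma mul_log_le_mul_log {a b : ℝ} (ha : 0 ≤ a) (hab : a ≤ b) : a * log a ≤ a * log b := by
  rcases ha.eq_or_lt with rfl | ha
  · simp
  · exact mul_le_mul_of_nonneg_left (log_le_log ha hab) ha.le

section Fibers

variable {α β M : Type*} [Fintype α] [DecidableEq β]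

lemma le_sum_fiber [AddCommMonoid M] [PartialOrder M] [IsOrderedAddMonoid M]
    (g : α → β) {q : α → M} (hq : ∀ a, 0 ≤ q a) (a : α) :
    q a ≤ ∑ a', if g a' = g a then q a' else 0 := by
  simpa using single_le_sum (f := fun a' ↦ if g a' = g a then q a' else 0)
    (fun a' _ ↦ by split_ifs; exacts [hq a', le_rfl]) (mem_univ a)

lemma sum_mul_comp_eq_sum_fiber_mul [Fintype β] [NonUnitalNonAssocSemiring M]
    (g : α → β) (q : α → M) (c : β → M) :
    ∑ a, q a * c (g a) = ∑ b, (∑ a, if g a = b then q a else 0) * c b := by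
  rw [← sum_fiberwise univ g]
  refine sum_congr rfl fun b _ ↦ ?_
  rw [sum_mul, sum_filter]
  refine sum_congr rfl fun a _ ↦ ?_
  split_ifs with h
  exacts [h ▸ rfl, (zero_mul _).symm]

end Fibers

lemma sum_ite_eval_eq_prod {ι : Type*} [Fintype ι] [DecidableEq ι] {R : ι → Type*}
    [∀ i, Fintype (R i)] [∀ i, DecidableEq (R i)] {A : Type*} [CommSemiring A]
    (μ : ∀ i, R i → A) (hμ : ∀ i, ∑ y, μ i y = 1) (i : ι) (x : R i) :
    (∑ r : ∀ i, R i, if r i = x then ∏ j, μ j (r j) else 0) = μ i x := by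
  set t : ∀ j, Finset (R j) := Function.update (fun _ ↦ univ) i {x}
  have hfiber : Fintype.piFinset t = ({r | r i = x} : Finset (∀ i, R i)) := by
    simpa using Fintype.piFinset_update_singleton_eq_filter_piFinset_eq (fun _ ↦ univ) i
      (mem_univ x)
  rw [← sum_filter, ← hfiber, ← prod_univ_sum, prod_eq_single i]
  · simp [t]
  · intro j _ hj
    simp [t, Function.update_of_ne hj, hμ]
  · simp

section Marginals

variable {S : Type*} {N : ℕ} {R : Fin N → Type*} [∀ n, Fintype (R n)] [∀ n, DecidableEq (R n)]

lemma le_coordMarginal (P : S → (∀ n, R n) → ℝ) {s : S} (hP0 : ∀ r, 0 ≤ P s r)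
    (n : Fin N) (r : ∀ m, R m) : P s r ≤ coordMarginal P n s (r n) :=
  le_sum_fiber (fun r' : ∀ m, R m ↦ r' n) hP0 r

lemma sum_coordMarginal (P : S → (∀ n, R n) → ℝ) (s : S) (n : Fin N) :
    ∑ x, coordMarginal P n s x = ∑ r, P s r := by
  unfold coordMarginal
  rw [sum_comm]
  simp

lemma pNI_nonneg (P : S → (∀ n, R n) → ℝ) {s : S} (hP0 : ∀ r, 0 ≤ P s r) (r : ∀ n, R n) :
    0 ≤ pNI P s r :=
  prod_nonneg fun n _ ↦ (hP0 r).trans (le_coordMarginal P hP0 n r)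

lemma pNI_pos (P : S → (∀ n, R n) → ℝ) {s : S} (hP0 : ∀ r, 0 ≤ P s r) {r : ∀ n, R n}
    (hr : 0 < P s r) : 0 < pNI P s r :=
  prod_pos fun n _ ↦ hr.trans_le (le_coordMarginal P hP0 n r)

lemma sum_pNI (P : S → (∀ n, R n) → ℝ) {s : S} (hP1 : ∑ r, P s r = 1) :
    ∑ r, pNI P s r = 1 := by
  simp [pNI, ← Fintype.prod_sum, sum_coordMarginal, hP1]

lemma coordMarginal_pNI (P : S → (∀ n, R n) → ℝ) {s : S} (hP1 : ∑ r, P s r = 1)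
    (n : Fin N) (x : R n) : coordMarginal (pNI P) n s x = coordMarginal P n s x :=
  sum_ite_eval_eq_prod (fun m ↦ coordMarginal P m s) (fun m ↦ by rw [sum_coordMarginal, hP1]) n x

lemma sum_mul_log_pNI (P P' : S → (∀ n, R n) → ℝ) (s : S)
    (hsupp : ∀ r, P' s r ≠ 0 → pNI P s r ≠ 0) :
    ∑ r, P' s r * log (pNI P s r)
      = ∑ n, ∑ x, coordMarginal P' n s x * log (coordMarginal P n s x) := by
  have hsplit : ∀ r, P' s r * log (pNI P s r)
      = ∑ n, P' s r * log (coordMarginal P n s (r n)) := by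
    intro r
    rcases eq_or_ne (P' s r) 0 with hr | hr
    · simp [hr]
    · rw [← mul_sum, pNI, log_prod fun n _ ↦ (prod_ne_zero_iff.mp (hsupp r hr)) n (mem_univ n)]
  simp_rw [hsplit]
  rw [sum_comm]
  exact sum_congr rfl fun n _ ↦ sum_mul_comp_eq_sum_fiber_mul (fun r : ∀ m, R m ↦ r n) (P' s)
    (fun x ↦ log (coordMarginal P n s x))

end Marginals

theorem reduced_code_to_noise_independent_forces_independence_general
    {S : Type*} {N : ℕ} (R : Fin N → Type*)
    [∀ n, Fintype (R n)] [∀ n, DecidableEq (R n)]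
    (p : S → ℝ)
    (P : S → (∀ n, R n) → ℝ) (hP0 : ∀ s r, 0 ≤ P s r)
    (hP1 : ∀ s, ∑ r, P s r = 1)
    (f : (∀ n, R n) → (∀ n, R n))
    (hf : ∀ s, 0 < p s → ∀ rt, (∑ r, if f r = rt then P s r else 0) = pNI P s rt) :
    ∀ s, 0 < p s → ∀ r, P s r = pNI P s r := by
  intro s hs
  have habs : ∀ r, pNI P s r = 0 → P s r = 0 := fun r h ↦
    ((hP0 s r).eq_or_lt.resolve_right fun hr ↦ (pNI_pos P (hP0 s) hr).ne' h).symm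
  have hfiber : ∀ r, P s r ≤ pNI P s (f r) := fun r ↦
    (le_sum_fiber f (hP0 s) r).trans_eq (hf s hs (f r))
  have hcross : ∑ r, P s r * log (P s r) ≤ ∑ r, P s r * log (pNI P s r) := calc
    _ ≤ ∑ r, P s r * log (pNI P s (f r)) :=
      sum_le_sum fun r _ ↦ mul_log_le_mul_log (hP0 s r) (hfiber r)
    _ = ∑ r, pNI P s r * log (pNI P s r) := by
      simp_rw [sum_mul_comp_eq_sum_fiber_mul f (P s) (fun r ↦ log (pNI P s r)), hf s hs]
    _ = ∑ r, P s r * log (pNI P s r) := by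
      rw [sum_mul_log_pNI P (pNI P) s fun _ ↦ id, sum_mul_log_pNI P P s fun r h ↦ mt (habs r) h]
      simp_rw [coordMarginal_pNI P (hP1 s)]
  exact congrFun (eq_of_sum_mul_log_le (hP0 s) (pNI_nonneg P (hP0 s)) habs
    (by rw [hP1, sum_pNI P (hP1 s)]) hcross)

/-- If a deterministic function `f : 𝓡 → 𝓡` pushes `P(·|s)` forward
to the noise-independent surrogate `P^ni(·|s)` for every stimulus with positive
prior, then `P(·|s)` already equals `P^ni(·|s)` for every such stimulus. -/
theorem reduced_code_to_noise_independent_forces_independence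
    {S : Type*} [Fintype S] {N : ℕ} (R : Fin N → Type*)
    [∀ n, Fintype (R n)] [∀ n, DecidableEq (R n)]
    (p : S → ℝ) (hp0 : ∀ s, 0 ≤ p s) (hp1 : ∑ s, p s = 1)
    (P : S → (∀ n, R n) → ℝ) (hP0 : ∀ s r, 0 ≤ P s r)
    (hP1 : ∀ s, ∑ r, P s r = 1)
    (f : (∀ n, R n) → (∀ n, R n))
    (hf : ∀ s, 0 < p s → ∀ rt, (∑ r, if f r = rt then P s r else 0) = pNI P s rt) :
    ∀ s, 0 < p s → ∀ r, P s r = pNI P s r :=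
  reduced_code_to_noise_independent_forces_independence_general R p P hP0 hP1 f hf
end

section
/- Assume the joint distribution has full support, i.e., P(s,r) > 0 for all s and r. Then ∑_{s,r} P(s,r) log P(r|s) − ∑_{s,r} p(s)P(r) log P(r|s) ≥ I(S;R) ≥ 0. Consequently, if ∑_{s,r} P(s,r) log P(r|s) = ∑_{s,r} p(s)P(r) log P(r|s), then I(S;R) = 0, i.e., S and R are independent. -/
open scoped BigOperators

/-- Mutual information `I(S;R) = ∑_{s,r} P(s,r) log (P(s,r) / (p(s) P(r)))`,
where `P(s,r) = p s * P s r` and `P(r) = ∑_s p s * P s r`. -/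
noncomputable def mutInfo {S R : Type*} [Fintype S] [Fintype R]
    (p : S → ℝ) (P : S → R → ℝ) : ℝ :=
  ∑ s, ∑ r, p s * P s r *
    Real.log ((p s * P s r) / (p s * ∑ s', p s' * P s' r))

private lemma log_sub_log_ge (a b : ℝ) (ha : 0 < a) (hb : 0 < b) :
    1 - b / a ≤ Real.log a - Real.log b := by
  have h := Real.log_le_sub_one_of_pos (div_pos hb ha)
  rw [Real.log_div hb.ne' ha.ne'] at h
  linarith

/-- Under full joint support,
`∑_{s,r} P(s,r) log P(r|s) − ∑_{s,r} p(s) P(r) log P(r|s) ≥ I(S;R) ≥ 0`;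
consequently, if the two sums are equal, then `I(S;R) = 0`. -/
theorem loglik_difference_bounds_information
    {S R : Type*} [Fintype S] [Fintype R]
    (p : S → ℝ) (hp0 : ∀ s, 0 ≤ p s) (hp1 : ∑ s, p s = 1)
    (P : S → R → ℝ) (hP0 : ∀ s r, 0 ≤ P s r) (hP1 : ∀ s, ∑ r, P s r = 1)
    (hfull : ∀ s r, 0 < p s * P s r) :
    0 ≤ mutInfo p P ∧
    mutInfo p P ≤
      (∑ s, ∑ r, p s * P s r * Real.log (P s r)) -
        (∑ s, ∑ r, p s * (∑ s', p s' * P s' r) * Real.log (P s r)) ∧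
    ((∑ s, ∑ r, p s * P s r * Real.log (P s r)) =
        (∑ s, ∑ r, p s * (∑ s', p s' * P s' r) * Real.log (P s r)) →
      mutInfo p P = 0) := by
  classical
  set q : R → ℝ := fun r => ∑ s', p s' * P s' r with hqdef
  -- nonemptiness
  have hS : (Finset.univ : Finset S).Nonempty := by
    by_contra h
    rw [Finset.not_nonempty_iff_eq_empty] at h
    rw [h, Finset.sum_empty] at hp1
    norm_num at hp1
  obtain ⟨s0, _⟩ := hS
  have hR : (Finset.univ : Finset R).Nonempty := by
    by_contra h
    rw [Finset.not_nonempty_iff_eq_empty] at h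
    have := hP1 s0
    rw [h, Finset.sum_empty] at this
    norm_num at this
  obtain ⟨r0, _⟩ := hR
  have hppos : ∀ s, 0 < p s := by
    intro s
    rcases (hp0 s).lt_or_eq with h | h
    · exact h
    · exfalso; have := hfull s r0; rw [← h, zero_mul] at this; exact lt_irrefl _ this
  have hPpos : ∀ s r, 0 < P s r := by
    intro s r
    have h := hfull s r
    nlinarith [hppos s, hP0 s r]
  show 0 ≤ mutInfo p P ∧
    mutInfo p P ≤
      (∑ s, ∑ r, p s * P s r * Real.log (P s r)) -
        (∑ s, ∑ r, p s * q r * Real.log (P s r)) ∧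
    ((∑ s, ∑ r, p s * P s r * Real.log (P s r)) =
        (∑ s, ∑ r, p s * q r * Real.log (P s r)) →
      mutInfo p P = 0)
  have hqpos : ∀ r, 0 < q r := fun r =>
    Finset.sum_pos (fun s _ => hfull s r) ⟨s0, Finset.mem_univ s0⟩
  -- basic sums
  have hqsum : ∑ r, q r = 1 := by
    calc ∑ r, q r = ∑ s', ∑ r, p s' * P s' r := Finset.sum_comm
    _ = ∑ s', p s' * ∑ r, P s' r := by simp [Finset.mul_sum]
    _ = 1 := by simp [hP1, hp1]
  have hsum1 : ∑ s, ∑ r, p s * P s r = 1 := by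
    simp only [← Finset.mul_sum, hP1, mul_one, hp1]
  have hsum2 : ∑ s, ∑ r, p s * q r = 1 := by
    simp only [← Finset.mul_sum, hqsum, mul_one, hp1]
  -- rewrite mutInfo
  have hmI : mutInfo p P = ∑ s, ∑ r, p s * P s r * (Real.log (P s r) - Real.log (q r)) := by
    unfold mutInfo
    refine Finset.sum_congr rfl fun s _ => Finset.sum_congr rfl fun r _ => ?_
    rw [mul_div_mul_left _ _ (hppos s).ne', Real.log_div (hPpos s r).ne' (hqpos r).ne']
  -- nonnegativity
  have hzero : ∑ s, ∑ r, (p s * P s r - p s * q r) = 0 := by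
    simp only [Finset.sum_sub_distrib, hsum1, hsum2, sub_self]
  have h1 : 0 ≤ mutInfo p P := by
    rw [hmI, ← hzero]
    refine Finset.sum_le_sum fun s _ => Finset.sum_le_sum fun r _ => ?_
    have hl := log_sub_log_ge (P s r) (q r) (hPpos s r) (hqpos r)
    have hne := (hPpos s r).ne'
    have h2 : P s r * (1 - q r / P s r) = P s r - q r := by
      field_simp
    nlinarith [mul_pos (hppos s) (hPpos s r), hppos s, hPpos s r]
  -- swap identity
  have hswap : ∑ s, ∑ r, p s * P s r * Real.log (q r)
      = ∑ s, ∑ r, p s * q r * Real.log (q r) := by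
    rw [Finset.sum_comm]
    conv_rhs => rw [Finset.sum_comm]
    refine Finset.sum_congr rfl fun r _ => ?_
    rw [← Finset.sum_mul, ← Finset.sum_mul]
    congr 1
    calc ∑ i, p i * P i r = q r := rfl
    _ = (∑ i, p i) * q r := by rw [hp1, one_mul]
    _ = ∑ i, p i * q r := Finset.sum_mul _ _ _

  -- gap identity
  have hgap : (∑ s, ∑ r, p s * P s r * Real.log (P s r)) -
        (∑ s, ∑ r, p s * q r * Real.log (P s r)) - mutInfo p P
      = ∑ s, ∑ r, p s * q r * (Real.log (q r) - Real.log (P s r)) := by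
    rw [hmI]
    simp only [mul_sub, Finset.sum_sub_distrib]
    have := hswap
    linarith
  have hgapnn : 0 ≤ ∑ s, ∑ r, p s * q r * (Real.log (q r) - Real.log (P s r)) := by
    have hzero' : ∑ s, ∑ r, (p s * q r - p s * P s r) = 0 := by
      simp only [Finset.sum_sub_distrib, hsum1, hsum2, sub_self]
    rw [← hzero']
    refine Finset.sum_le_sum fun s _ => Finset.sum_le_sum fun r _ => ?_
    have hl := log_sub_log_ge (q r) (P s r) (hqpos r) (hPpos s r)
    have hne := (hqpos r).ne'
    have h2 : q r * (1 - P s r / q r) = q r - P s r := by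
      field_simp
    nlinarith [mul_pos (hppos s) (hqpos r), hppos s, hqpos r]
  have h2 : mutInfo p P ≤
      (∑ s, ∑ r, p s * P s r * Real.log (P s r)) -
        (∑ s, ∑ r, p s * q r * Real.log (P s r)) := by
    linarith [hgap, hgapnn]
  refine ⟨h1, h2, fun heq => ?_⟩
  have : (∑ s, ∑ r, p s * P s r * Real.log (P s r)) =
      (∑ s, ∑ r, p s * q r * Real.log (P s r)) := heq
  linarith
end

section
/- Let M be an n×n real matrix that is right stochastic (all entries nonnegative and every row sums to 1), idempotent (M·M = M), and has positive diagonal (M i i > 0 for every index i). Then the index set can be partitioned into nonempty blocks such that: (a) any two indices in the same block have identical rows of M, and (b) M i j = 0 whenever i and j lie in different blocks. (Structure of positive-diagonal idempotent stochastic matrices used in Theorem 5.) -/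
open scoped BigOperators

/-- A right-stochastic, idempotent matrix with positive diagonal
partitions its index set (via an equivalence relation, whose classes are the
nonempty blocks) so that rows are constant within each block and entries vanish
across distinct blocks. -/
theorem positive_diagonal_idempotent_stochastic_structure
    {n : ℕ} (M : Matrix (Fin n) (Fin n) ℝ)
    (h0 : ∀ i j, 0 ≤ M i j) (h1 : ∀ i, ∑ j, M i j = 1)
    (hidem : M * M = M) (hdiag : ∀ i, 0 < M i i) :
    ∃ e : Setoid (Fin n),
      (∀ i i', e.r i i' → ∀ j, M i j = M i' j) ∧
      (∀ i j, ¬ e.r i j → M i j = 0) := by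
  have hmul : ∀ i k, M i k = ∑ l, M i l * M l k := by
    intro i k
    conv_lhs => rw [← hidem]
    rw [Matrix.mul_apply]
  have htrans : ∀ i j k, 0 < M i j → 0 < M j k → 0 < M i k := by
    intro i j k hij hjk
    have h := hmul i k
    have hle : M i j * M j k ≤ ∑ l, M i l * M l k :=
      Finset.single_le_sum (fun l _ => mul_nonneg (h0 i l) (h0 l k))
        (Finset.mem_univ j)
    nlinarith
  -- if `M k i` is the maximum of column `i` and `M k b > 0`, then `M b i` is also max
  have hstep : ∀ (i k : Fin n), (∀ l, M l i ≤ M k i) →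
      ∀ b, 0 < M k b → M b i = M k i := by
    intro i k hmax b hkb
    by_contra hne
    have hlt : M b i < M k i := lt_of_le_of_ne (hmax b) hne
    have h := hmul k i
    have hsum : ∑ l, M k l * M l i < ∑ l, M k l * M k i := by
      apply Finset.sum_lt_sum
      · intro l _
        exact mul_le_mul_of_nonneg_left (hmax l) (h0 k l)
      · exact ⟨b, Finset.mem_univ b, by nlinarith⟩
    rw [← Finset.sum_mul, h1 k, one_mul, ← h] at hsum
    exact lt_irrefl _ hsum
  have hsymm : ∀ i j, 0 < M i j → 0 < M j i := by
    intro i j hij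
    obtain ⟨k0, -, hk0⟩ := Finset.exists_max_image Finset.univ
      (fun l => M l i) ⟨i, Finset.mem_univ i⟩
    have hmax : ∀ l, M l i ≤ M k0 i := fun l => hk0 l (Finset.mem_univ l)
    have hk0pos : 0 < M k0 i := lt_of_lt_of_le (hdiag i) (hmax i)
    have hii : M i i = M k0 i := hstep i k0 hmax i hk0pos
    have hmax' : ∀ l, M l i ≤ M i i := by intro l; rw [hii]; exact hmax l
    have hji : M j i = M i i := hstep i i hmax' j hij
    rw [hji]; exact hdiag i
  have hrows : ∀ i j, 0 < M i j → ∀ l, M i l = M j l := by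
    intro i j hij l
    set S := Finset.univ.filter (fun b => 0 < M i b) with hS
    have hiS : i ∈ S := by simp [hS, hdiag i]
    have hjS : j ∈ S := by simp [hS, hij]
    obtain ⟨a0, ha0S, ha0⟩ := Finset.exists_min_image S (fun b => M b l) ⟨i, hiS⟩
    have ha0S' : 0 < M i a0 := by
      simp only [hS, Finset.mem_filter] at ha0S; exact ha0S.2
    have hposw : ∀ c ∈ S, 0 < M a0 c := by
      intro c hcS
      simp only [hS, Finset.mem_filter] at hcS
      exact htrans a0 i c (hsymm i a0 ha0S') hcS.2
    have hzerow : ∀ c ∉ S, M a0 c = 0 := by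
      intro c hcS
      by_contra hc
      have hpos : 0 < M a0 c := lt_of_le_of_ne (h0 a0 c) (Ne.symm hc)
      exact hcS (by
        simp only [hS, Finset.mem_filter]
        exact ⟨Finset.mem_univ c, htrans i a0 c ha0S' hpos⟩)
    have hsum1 : ∑ c ∈ S, M a0 c = 1 :=
      (Finset.sum_subset (Finset.subset_univ S)
        (fun c _ hc => hzerow c hc)).trans (h1 a0)
    have key : ∀ b ∈ S, M b l = M a0 l := by
      intro b hbS
      by_contra hne
      have hblt : M a0 l < M b l := lt_of_le_of_ne (ha0 b hbS) (Ne.symm hne)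
      have hsumS : ∑ c ∈ S, M a0 c * M c l = M a0 l := by
        rw [Finset.sum_subset (Finset.subset_univ S)
          (fun c _ hc => by rw [hzerow c hc, zero_mul])]
        exact (hmul a0 l).symm
      have hlt : ∑ c ∈ S, M a0 c * M a0 l < ∑ c ∈ S, M a0 c * M c l := by
        apply Finset.sum_lt_sum
        · intro c hcS
          exact mul_le_mul_of_nonneg_left (ha0 c hcS) (h0 a0 c)
        · exact ⟨b, hbS, by nlinarith [hposw b hbS]⟩
      rw [← Finset.sum_mul, hsum1, one_mul, hsumS] at hlt
      exact lt_irrefl _ hlt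
    rw [key i hiS, key j hjS]
  refine ⟨⟨fun i j => 0 < M i j, ⟨fun i => hdiag i, fun h => hsymm _ _ h,
    fun h h' => htrans _ _ _ h h'⟩⟩, ?_, ?_⟩
  · exact fun i i' h j => hrows i i' h j
  · intro i j h
    exact le_antisymm (not_lt.mp h) (h0 i j)
end

section
/- Let 𝓡 be partitioned into disjoint blocks 𝓑₁, …, 𝓑_M, and let Q be a row-stochastic matrix on 𝓡×𝓡 such that Q(·|r) = Q(·|r') whenever r and r' lie in the same block, Q(r̃|r) = 0 whenever r̃ lies outside the block of r, and Q(r|r) > 0 for every r. Let P̃(r̃|s) = ∑_r P(r|s)Q(r̃|r), with induced joint P̃(s,r̃) = p(s)P̃(r̃|s) and marginal P̃(r̃). Then for every stimulus s and every r̃ in block 𝓑_m with P̃(r̃) > 0, the posterior satisfies P̃(s|r̃) = (∑_{r∈𝓑_m} P(s,r)) / (∑_{r∈𝓑_m} P(r)), i.e., it equals the posterior probability of s given that the original response lies in 𝓑_m. -/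
open scoped BigOperators

/-- Let `blk : 𝓡 → B` describe a partition of the response set into
blocks, and let `Q` be row-stochastic with rows constant within blocks, vanishing
across blocks, and positive on the diagonal.  Then for every stimulus `s` and every
`rt` with `P̃(rt) > 0`, the posterior `P̃(s|rt)` equals the posterior probability of
`s` given that the original response lies in the block of `rt`. -/
theorem block_stochastic_code_posterior
    {S R B : Type*} [Fintype S] [Fintype R] [Fintype B] [DecidableEq B]
    (p : S → ℝ) (hp0 : ∀ s, 0 ≤ p s) (hp1 : ∑ s, p s = 1)
    (P : S → R → ℝ) (hP0 : ∀ s r, 0 ≤ P s r) (hP1 : ∀ s, ∑ r, P s r = 1)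
    (blk : R → B)
    (Q : R → R → ℝ) (hQ0 : ∀ r rt, 0 ≤ Q r rt) (hQ1 : ∀ r, ∑ rt, Q r rt = 1)
    (hsame : ∀ r r', blk r = blk r' → ∀ rt, Q r rt = Q r' rt)
    (hblock : ∀ r rt, blk rt ≠ blk r → Q r rt = 0)
    (hdiag : ∀ r, 0 < Q r r)
    (s : S) (rt : R)
    (hpos : 0 < ∑ s', p s' * ∑ r, P s' r * Q r rt) :
    (p s * ∑ r, P s r * Q r rt) / (∑ s', p s' * ∑ r, P s' r * Q r rt) =
      (∑ r, if blk r = blk rt then p s * P s r else 0) /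
        (∑ r, if blk r = blk rt then (∑ s', p s' * P s' r) else 0) := by
  set c := Q rt rt with hc
  have hc0 : c ≠ 0 := ne_of_gt (hdiag rt)
  have key : ∀ s' : S, ∑ r, P s' r * Q r rt
      = c * ∑ r, (if blk r = blk rt then P s' r else 0) := by
    intro s'
    rw [Finset.mul_sum]
    refine Finset.sum_congr rfl fun r _ => ?_
    by_cases h : blk r = blk rt
    · rw [hsame r rt h rt, if_pos h]; ring
    · rw [hblock r rt (fun hh => h hh.symm), if_neg h]; ring
  have hnum : (∑ r, if blk r = blk rt then p s * P s r else 0)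
      = p s * ∑ r, (if blk r = blk rt then P s r else 0) := by
    rw [Finset.mul_sum]
    refine Finset.sum_congr rfl fun r _ => ?_
    by_cases h : blk r = blk rt <;> simp [h]
  have hden : (∑ r, if blk r = blk rt then (∑ s', p s' * P s' r) else 0)
      = ∑ s', p s' * ∑ r, (if blk r = blk rt then P s' r else 0) := by
    have h1 : ∀ r : R, (if blk r = blk rt then ∑ s', p s' * P s' r else 0)
        = ∑ s', p s' * (if blk r = blk rt then P s' r else 0) := by
      intro r; by_cases h : blk r = blk rt <;> simp [h]
    simp_rw [h1, Finset.mul_sum]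
    exact Finset.sum_comm
  rw [hnum, hden, key s]
  have hden2 : (∑ s', p s' * ∑ r, P s' r * Q r rt)
      = c * ∑ s', p s' * ∑ r, (if blk r = blk rt then P s' r else 0) := by
    rw [Finset.mul_sum]
    refine Finset.sum_congr rfl fun s' _ => ?_
    rw [key s']; ring
  rw [hden2, show p s * (c * ∑ r, (if blk r = blk rt then P s r else 0))
      = c * (p s * ∑ r, (if blk r = blk rt then P s r else 0)) by ring,
    mul_div_mul_left _ _ hc0]
end

section
/- There exist a finite stimulus set S with prior p, a finite response set 𝓡, a conditional distribution P(r|s), and a row-stochastic matrix Q on 𝓡×𝓡 with induced P̃(r̃|s) = ∑_r P(r|s)Q(r̃|r) whose response marginal has the same support as that of P (P̃(r) > 0 if and only if P(r) > 0), such that the encoding-oriented loss ΔI := I(S;R) − I(S;R̃) is strictly greater than the decoding-oriented loss D := ∑_{s,r : P(s,r)>0} P(s,r) log(P(s|r)/P̃(s|r)); and there exists another such instance (same kind of data) in which ΔI is strictly smaller than D. (Stochastic codes may cause different losses in the encoding and the decoding problems, in either direction.) -/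
open scoped BigOperators

/-- Decoding-oriented loss `D = ∑_{s,r : P(s,r)>0} P(s,r) log (P(s|r) / P̃(s|r))`
of a decoder trained on the code with conditional distribution `Pt` but operating
on the code with conditional distribution `P`. -/
noncomputable def decLoss {S R : Type*} [Fintype S] [Fintype R]
    (p : S → ℝ) (P Pt : S → R → ℝ) : ℝ :=
  ∑ s, ∑ r, if 0 < p s * P s r then
      p s * P s r * Real.log
        (((p s * P s r) / (∑ s', p s' * P s' r)) /
          ((p s * Pt s r) / (∑ s', p s' * Pt s' r)))
    else 0

/-- There is an instance (prior, conditional distribution, and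
row-stochastic code whose surrogate marginal has the same support as the original
response marginal) for which the encoding-oriented loss `ΔI = I(S;R) − I(S;R̃)`
strictly exceeds the decoding-oriented loss `D`, and another such instance for
which `ΔI` is strictly smaller than `D`. -/
theorem stochastic_codes_encoding_decoding_losses_differ :
    (∃ (nS nR : ℕ) (p : Fin nS → ℝ) (P : Fin nS → Fin nR → ℝ)
        (Q : Fin nR → Fin nR → ℝ),
      (∀ s, 0 ≤ p s) ∧ (∑ s, p s = 1) ∧
      (∀ s r, 0 ≤ P s r) ∧ (∀ s, ∑ r, P s r = 1) ∧
      (∀ r rt, 0 ≤ Q r rt) ∧ (∀ r, ∑ rt, Q r rt = 1) ∧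
      (∀ rt, 0 < (∑ s, p s * ∑ r, P s r * Q r rt) ↔ 0 < (∑ s, p s * P s rt)) ∧
      decLoss p P (fun s rt => ∑ r, P s r * Q r rt) <
        mutInfo p P - mutInfo p (fun s rt => ∑ r, P s r * Q r rt)) ∧
    (∃ (nS nR : ℕ) (p : Fin nS → ℝ) (P : Fin nS → Fin nR → ℝ)
        (Q : Fin nR → Fin nR → ℝ),
      (∀ s, 0 ≤ p s) ∧ (∑ s, p s = 1) ∧
      (∀ s r, 0 ≤ P s r) ∧ (∀ s, ∑ r, P s r = 1) ∧
      (∀ r rt, 0 ≤ Q r rt) ∧ (∀ r, ∑ rt, Q r rt = 1) ∧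
      (∀ rt, 0 < (∑ s, p s * ∑ r, P s r * Q r rt) ↔ 0 < (∑ s, p s * P s rt)) ∧
      mutInfo p P - mutInfo p (fun s rt => ∑ r, P s r * Q r rt) <
        decLoss p P (fun s rt => ∑ r, P s r * Q r rt)) := by
  have h2 : Real.log ((3:ℝ)/2) = Real.log 3 - Real.log 2 := by
    rw [Real.log_div (by norm_num) (by norm_num)]
  have h3 : Real.log ((1:ℝ)/2) = -Real.log 2 := by
    rw [Real.log_div (by norm_num) (by norm_num)]; simp
  have h4 : 0 < Real.log 3 := Real.log_pos (by norm_num)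
  constructor
  · refine ⟨2, 2, (fun _ => 1/2), (fun s r => if s = r then 1 else 0),
      (fun r rt => if r = rt then 3/4 else 1/4), ?_, ?_, ?_, ?_, ?_, ?_, ?_, ?_⟩
    · intro s; norm_num
    · simp [Fin.sum_univ_two]
    · intro s r; beta_reduce; split <;> norm_num
    · intro s; fin_cases s <;> simp [Fin.sum_univ_two]
    · intro r rt; beta_reduce; split <;> norm_num
    · intro r; fin_cases r <;> norm_num [Fin.sum_univ_two]
    · intro rt; fin_cases rt <;> norm_num [Fin.sum_univ_two]
    · simp [mutInfo, decLoss, Fin.sum_univ_two]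
      norm_num
      have h1 : Real.log ((4:ℝ)/3) = 2*Real.log 2 - Real.log 3 := by
        rw [show (4:ℝ)/3 = 2^2/3 by norm_num,
          Real.log_div (by norm_num) (by norm_num), Real.log_pow]
        push_cast; ring
      linarith
  · refine ⟨2, 2, (fun _ => 1/2), (fun s r => if s = r then 1 else 0),
      (fun r rt => if r = rt then 1/4 else 3/4), ?_, ?_, ?_, ?_, ?_, ?_, ?_, ?_⟩
    · intro s; norm_num
    · simp [Fin.sum_univ_two]
    · intro s r; beta_reduce; split <;> norm_num
    · intro s; fin_cases s <;> simp [Fin.sum_univ_two]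
    · intro r rt; beta_reduce; split <;> norm_num
    · intro r; fin_cases r <;> norm_num [Fin.sum_univ_two]
    · intro rt; fin_cases rt <;> norm_num [Fin.sum_univ_two]
    · simp [mutInfo, decLoss, Fin.sum_univ_two]
      norm_num
      have h5 : Real.log (4:ℝ) = 2*Real.log 2 := by
        rw [show (4:ℝ) = 2^2 by norm_num, Real.log_pow]; push_cast; ring
      linarith
end

section
/- There exist a finite stimulus set S with prior p, a finite response set 𝓡, a conditional distribution P(r|s) with full joint support (P(s,r) > 0 for all s, r), and a permutation π of 𝓡, such that, setting P̃(r̃|s) = P(π⁻¹(r̃)|s): (i) I(S;R̃) = I(S;R), so the encoding-oriented loss ΔI = 0; yet (ii) ∑_{s,r} P(s,r) log(P(s|r)/P(s|π⁻¹(r))) > I(S;R). (A deterministic bijective transformation can make the decoding-oriented loss exceed the total encoded information even though it causes no encoding loss.) -/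
open scoped BigOperators

/-- There is an instance with full joint support and a permutation
`π` of the response set such that the transformed code `R̃ = π(R)` carries exactly
the same information as `R` (zero encoding loss), and yet the decoding-oriented loss
`∑_{s,r} P(s,r) log (P(s|r) / P(s|π⁻¹(r)))` strictly exceeds the total encoded
information `I(S;R)`. -/
theorem bijective_code_decoding_loss_exceeds_information :
    ∃ (nS nR : ℕ) (p : Fin nS → ℝ) (P : Fin nS → Fin nR → ℝ)
      (π : Equiv.Perm (Fin nR)),
      (∀ s, 0 ≤ p s) ∧ (∑ s, p s = 1) ∧
      (∀ s r, 0 ≤ P s r) ∧ (∀ s, ∑ r, P s r = 1) ∧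
      (∀ s r, 0 < p s * P s r) ∧
      mutInfo p (fun s rt => P s (π.symm rt)) = mutInfo p P ∧
      mutInfo p P <
        ∑ s, ∑ r, p s * P s r *
          Real.log (((p s * P s r) / (∑ s', p s' * P s' r)) /
            ((p s * P s (π.symm r)) / (∑ s', p s' * P s' (π.symm r)))) := by
  refine ⟨2, 2, fun _ => 1/2, fun s r => if s = r then 3/4 else 1/4,
    Equiv.swap 0 1, ?_, ?_, ?_, ?_, ?_, ?_, ?_⟩
  · intro s; norm_num
  · simp [Fin.sum_univ_two]
  · intro s r; positivity
  · intro s; fin_cases s <;> simp [Fin.sum_univ_two] <;> norm_num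
  · intro s r; fin_cases s <;> fin_cases r <;> norm_num
  · unfold mutInfo
    simp [Fin.sum_univ_two, Equiv.swap_apply_left, Equiv.swap_apply_right]
    ring
  · unfold mutInfo
    simp only [Fin.sum_univ_two]
    norm_num [Equiv.swap_apply_left, Equiv.swap_apply_right, Fin.ext_iff]
    have h32 : Real.log (3/2) = Real.log 3 - Real.log 2 := by
      rw [Real.log_div (by norm_num) (by norm_num)]
    have h12 : Real.log (1/2) = -Real.log 2 := by
      rw [Real.log_div (by norm_num) (by norm_num), Real.log_one]; ring
    have h13 : Real.log (1/3) = -Real.log 3 := by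
      rw [Real.log_div (by norm_num) (by norm_num), Real.log_one]; ring
    have key : Real.log 3 < 4 * Real.log 2 := by
      have : Real.log 3 < Real.log 16 := Real.log_lt_log (by norm_num) (by norm_num)
      have h16 : Real.log 16 = 4 * Real.log 2 := by
        rw [show (16:ℝ) = 2^4 by norm_num, Real.log_pow]; push_cast; ring
      linarith
    rw [h32, h12, h13]; linarith
end

section
/- There exist a finite stimulus set S with prior p and a jointly distributed random vector X = (X₁,…,X₆) with values in {0,1}⁶ such that: I(S;X) > 0; I(S;(X₁+X₂+X₃, X₄+X₅+X₆)) = I(S;X); and I(S;(X₁+X₂, X₃+X₄, X₅+X₆)) = 0. (Binning spike trains at a coarse bin size can preserve all encoded information while binning at an intermediate bin size preserves none; the encoded information is not monotone in bin size.) -/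
open scoped BigOperators

/-- Mutual information `I(S;g(X))` computed from a joint distribution `Pj(s,x)` with
S-marginal `p`:  `∑_{s,y} P(S=s, g(X)=y) log (P(S=s, g(X)=y) / (p(s) P(g(X)=y)))`,
where `P(S=s, g(X)=y) = ∑_{x : g(x)=y} Pj(s,x)` and `0·log 0 = 0`.  The sum over `y`
ranges over the image of `g`; values outside the image contribute zero terms. -/
noncomputable def mutInfoFun {S X Y : Type*} [Fintype S] [Fintype X] [DecidableEq Y]
    (p : S → ℝ) (Pj : S → X → ℝ) (g : X → Y) : ℝ :=
  ∑ s, ∑ y ∈ Finset.image g Finset.univ,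
    (∑ x, if g x = y then Pj s x else 0) *
      Real.log ((∑ x, if g x = y then Pj s x else 0) /
        (p s * ∑ s', ∑ x, if g x = y then Pj s' x else 0))

/-- The two codewords: `v 0` has a spike at position 2, `v 1` at position 3. -/
def myV : Fin 2 → (Fin 6 → Fin 2) :=
  ![fun i => if i = 2 then 1 else 0, fun i => if i = 3 then 1 else 0]

/-- Deterministic joint distribution: stimulus `s` (prob 1/2) always yields `myV s`. -/
noncomputable def myPj : Fin 2 → (Fin 6 → Fin 2) → ℝ :=
  fun s x => if x = myV s then 1/2 else 0

lemma myV_ne : myV 0 ≠ myV 1 := by decide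

lemma sumx {Y : Type*} [DecidableEq Y] (g : (Fin 6 → Fin 2) → Y) (y : Y) (s : Fin 2) :
    (∑ x, if g x = y then myPj s x else 0) = if g (myV s) = y then (1/2:ℝ) else 0 := by
  rw [Finset.sum_eq_single (myV s)]
  · simp [myPj]
  · intro x _ hx; simp [myPj, hx]
  · simp

lemma key {Y : Type*} [DecidableEq Y] (g : (Fin 6 → Fin 2) → Y) :
    mutInfoFun (fun _ => (1/2:ℝ)) myPj g
      = if g (myV 0) = g (myV 1) then 0 else Real.log 2 := by
  unfold mutInfoFun
  simp only [sumx, ite_mul, zero_mul]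
  have hmem : ∀ s : Fin 2, g (myV s) ∈ Finset.image g Finset.univ := by
    intro s; exact Finset.mem_image_of_mem g (Finset.mem_univ _)
  rw [Fin.sum_univ_two]
  rw [Finset.sum_ite_eq _ (g (myV 0)), Finset.sum_ite_eq _ (g (myV 1))]
  simp only [hmem 0, hmem 1, if_true, Fin.sum_univ_two]
  by_cases h : g (myV 0) = g (myV 1)
  · simp only [h, eq_self_iff_true, if_true]
    have : ((1:ℝ)/2) / (1/2 * (1/2 + 1/2)) = 1 := by norm_num
    rw [this, Real.log_one]
    ring
  · have h' : ¬ g (myV 1) = g (myV 0) := fun e => h e.symm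
    rw [if_neg h', if_neg h, if_neg h]
    have : ((1:ℝ)/2) / (1/2 * (1/2 + 0)) = 2 := by norm_num
    have this2 : ((1:ℝ)/2) / (1/2 * (0 + 1/2)) = 2 := by norm_num
    rw [this, this2]
    ring

/-- There are a finite stimulus set with prior `p` and a random
vector `X = (X₁,…,X₆)` with values in `{0,1}⁶` such that `I(S;X) > 0`, binning into
two triples preserves all information, while binning into three pairs preserves
none. -/
theorem binning_information_not_monotone :
    ∃ (nS : ℕ) (p : Fin nS → ℝ) (Pj : Fin nS → (Fin 6 → Fin 2) → ℝ),
      (∀ s x, 0 ≤ Pj s x) ∧ (∑ s, ∑ x, Pj s x = 1) ∧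
      (∀ s, ∑ x, Pj s x = p s) ∧
      0 < mutInfoFun p Pj (id : (Fin 6 → Fin 2) → (Fin 6 → Fin 2)) ∧
      mutInfoFun p Pj
          (fun x => (((x 0 : ℕ) + (x 1 : ℕ) + (x 2 : ℕ),
                      (x 3 : ℕ) + (x 4 : ℕ) + (x 5 : ℕ)) : ℕ × ℕ)) =
        mutInfoFun p Pj (id : (Fin 6 → Fin 2) → (Fin 6 → Fin 2)) ∧
      mutInfoFun p Pj
          (fun x => (((x 0 : ℕ) + (x 1 : ℕ),
                      (x 2 : ℕ) + (x 3 : ℕ),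
                      (x 4 : ℕ) + (x 5 : ℕ)) : ℕ × ℕ × ℕ)) = 0 := by
  refine ⟨2, fun _ => 1/2, myPj, ?_, ?_, ?_, ?_, ?_, ?_⟩
  · intro s x; unfold myPj; split <;> norm_num
  · have h : ∀ s : Fin 2, (∑ x, myPj s x) = 1/2 := by
      intro s
      unfold myPj
      rw [Finset.sum_ite_eq' Finset.univ (myV s) (fun _ => (1/2:ℝ))]
      simp
    rw [Fin.sum_univ_two, h 0, h 1]; norm_num
  · intro s
    unfold myPj
    rw [Finset.sum_ite_eq' Finset.univ (myV s) (fun _ => (1/2:ℝ))]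
    simp
  · rw [key]
    simp only [id_eq]
    rw [if_neg myV_ne]
    exact Real.log_pos (by norm_num)
  · rw [key, key]
    simp only [id_eq]
    rw [if_neg myV_ne, if_neg (by decide)]
  · rw [key]
    rw [if_pos (by decide)]
end

section
/- There exist a finite stimulus set S with prior p, a finite product response set 𝓡, and two conditional distributions P₁(r|s) and P₂(r|s) on 𝓡 such that: for each i ∈ {1,2}, the set 𝒬_i of row-stochastic matrices Q satisfying ∑_r P_i(r|s)Q(r̃|r) = P_i^ni(r̃|s) for all s with p(s) > 0 and all r̃ is nonempty; and yet 𝒬₁ ∩ 𝒬₂ = ∅. (The transition probabilities of stochastic codes that ignore noise correlations may depend on the marginal likelihoods: no single transition matrix works across distributions with different marginals; first part of the theorem on dependence of Q(R^ni|R).) -/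
/-!
Take a single stimulus. If `P₂` is the point mass at `r₀`, so is its surrogate, hence every
code feasible for `P₂` keeps `r₀` fixed with probability one. If `P₁` is uniform on the diagonal
of `A × A` with `|A| ≥ 2`, its surrogate gives `r₀ = (a, a)` only the mass `1/|A|²`, whereas
the single term `P₁(r₀) Q(r₀|r₀) = 1/|A|` of the feasibility sum already exceeds it. Each of
`P₁`, `P₂` alone is served by the code that ignores its input and samples from the surrogate.
-/

open scoped BigOperators

/-- First coordinate marginal of a conditional distribution on a product. -/
noncomputable def marg1 {S A B : Type*} [Fintype B]
    (P : S → A × B → ℝ) (s : S) (a : A) : ℝ := ∑ b, P s (a, b)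

/-- Second coordinate marginal of a conditional distribution on a product. -/
noncomputable def marg2 {S A B : Type*} [Fintype A]
    (P : S → A × B → ℝ) (s : S) (b : B) : ℝ := ∑ a, P s (a, b)

/-- Noise-independent surrogate `P^ni(r₁,r₂|s) = P₁(r₁|s) P₂(r₂|s)`. -/
noncomputable def pNI2 {S A B : Type*} [Fintype A] [Fintype B]
    (P : S → A × B → ℝ) (s : S) (r : A × B) : ℝ :=
  marg1 P s r.1 * marg2 P s r.2

/-- `Q` is a feasible transition matrix of a stochastic code mapping `P` onto its
noise-independent surrogate: it is row stochastic and
`∑_r P(r|s) Q(r̃|r) = P^ni(r̃|s)` for every `s` with `p s > 0` and every `r̃`. -/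
def feasibleNI {S A B : Type*} [Fintype A] [Fintype B]
    (p : S → ℝ) (P : S → A × B → ℝ) (Q : A × B → A × B → ℝ) : Prop :=
  (∀ r rt, 0 ≤ Q r rt) ∧ (∀ r, ∑ rt, Q r rt = 1) ∧
  (∀ s, 0 < p s → ∀ rt, (∑ r, P s r * Q r rt) = pNI2 P s rt)

open Finset

section Marginals

variable {S A B : Type*} [Fintype A] [Fintype B] (P : S → A × B → ℝ) (s : S)

lemma pNI2_nonneg (hP : ∀ r, 0 ≤ P s r) (r : A × B) : 0 ≤ pNI2 P s r :=
  mul_nonneg (sum_nonneg fun _ _ => hP _) (sum_nonneg fun _ _ => hP _)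

lemma sum_marg1 : ∑ a, marg1 P s a = ∑ r, P s r :=
  (Fintype.sum_prod_type _).symm

lemma sum_marg2 : ∑ b, marg2 P s b = ∑ r, P s r :=
  (Fintype.sum_prod_type_right _).symm

lemma sum_pNI2 : ∑ r, pNI2 P s r = (∑ r, P s r) ^ 2 := by
  rw [sq]
  nth_rw 1 [← sum_marg1 P s]
  rw [← sum_marg2 P s, sum_mul_sum, Fintype.sum_prod_type]
  rfl

end Marginals

section Feasible

variable {S A B : Type*} [Fintype A] [Fintype B] {p : S → ℝ} {P : S → A × B → ℝ}

lemma feasibleNI_const (s₀ : S) (hP : ∀ s, 0 < p s → P s = P s₀)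
    (hP₀ : ∀ r, 0 ≤ P s₀ r) (hP₁ : ∑ r, P s₀ r = 1) :
    feasibleNI p P (fun _ => pNI2 P s₀) := by
  refine ⟨fun _ => pNI2_nonneg P s₀ hP₀, fun _ => by rw [sum_pNI2, hP₁, one_pow], ?_⟩
  intro s hs rt
  have hNI : pNI2 P s = pNI2 P s₀ := by
    funext r
    simp only [pNI2, marg1, marg2, hP s hs]
  rw [hNI, hP s hs, ← sum_mul, hP₁, one_mul]

lemma feasibleNI.mul_le_pNI2 {Q : A × B → A × B → ℝ} {s : S} (hQ : feasibleNI p P Q)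
    (hP : ∀ r, 0 ≤ P s r) (hs : 0 < p s) (r rt : A × B) : P s r * Q r rt ≤ pNI2 P s rt :=
  hQ.2.2 s hs rt ▸ single_le_sum (fun r _ => mul_nonneg (hP r) (hQ.1 r rt)) (mem_univ r)

end Feasible

section PointMass

variable {S A B : Type*} [DecidableEq A] [DecidableEq B]

variable (S) in
def pointMass (r₀ : A × B) : S → A × B → ℝ := fun _ r => if r = r₀ then 1 else 0

lemma pointMass_nonneg (r₀ : A × B) (s : S) (r : A × B) : 0 ≤ pointMass S r₀ s r := by
  unfold pointMass
  split_ifs <;> norm_num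

variable [Fintype A] [Fintype B]

lemma sum_pointMass (r₀ : A × B) (s : S) : ∑ r, pointMass S r₀ s r = 1 := by
  simp [pointMass]

lemma pNI2_pointMass_self (r₀ : A × B) (s : S) : pNI2 (pointMass S r₀) s r₀ = 1 := by
  simp [pNI2, marg1, marg2, pointMass, Prod.ext_iff]

lemma feasibleNI.pointMass_apply_self {p : S → ℝ} {Q : A × B → A × B → ℝ} {r₀ : A × B} {s : S}
    (hQ : feasibleNI p (pointMass S r₀) Q) (hs : 0 < p s) : Q r₀ r₀ = 1 := by
  have h := hQ.2.2 s hs r₀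
  rw [pNI2_pointMass_self] at h
  simpa [pointMass] using h

lemma not_exists_feasibleNI_and_feasibleNI_pointMass {p : S → ℝ} {P : S → A × B → ℝ} {s : S}
    {r₀ : A × B} (hP : ∀ r, 0 ≤ P s r) (hs : 0 < p s) (hlt : pNI2 P s r₀ < P s r₀) :
    ¬ ∃ Q, feasibleNI p P Q ∧ feasibleNI p (pointMass S r₀) Q := by
  rintro ⟨Q, hQ, hQ₀⟩
  have hle := hQ.mul_le_pNI2 hP hs r₀ r₀
  rw [hQ₀.pointMass_apply_self hs, mul_one] at hle
  exact hle.not_gt hlt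

end PointMass

section DiagonalUniform

variable {S A : Type*} [Fintype A] [DecidableEq A]

variable (S A) in
noncomputable def diagonalUniform : S → A × A → ℝ :=
  fun _ r => if r.1 = r.2 then (Fintype.card A : ℝ)⁻¹ else 0

lemma diagonalUniform_nonneg (s : S) (r : A × A) : 0 ≤ diagonalUniform S A s r := by
  unfold diagonalUniform
  split_ifs <;> positivity

lemma sum_diagonalUniform [Nonempty A] (s : S) : ∑ r, diagonalUniform S A s r = 1 := by
  simp [diagonalUniform, Fintype.sum_prod_type]

lemma marg1_diagonalUniform (s : S) (a : A) :
    marg1 (diagonalUniform S A) s a = (Fintype.card A : ℝ)⁻¹ := by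
  simp [marg1, diagonalUniform]

lemma marg2_diagonalUniform (s : S) (b : A) :
    marg2 (diagonalUniform S A) s b = (Fintype.card A : ℝ)⁻¹ := by
  simp [marg2, diagonalUniform]

lemma pNI2_diagonalUniform_lt (hA : 1 < Fintype.card A) (s : S) (a : A) :
    pNI2 (diagonalUniform S A) s (a, a) < diagonalUniform S A s (a, a) := by
  have hinv : (Fintype.card A : ℝ)⁻¹ < 1 := inv_lt_one_of_one_lt₀ (by exact_mod_cast hA)
  rw [pNI2, marg1_diagonalUniform, marg2_diagonalUniform]
  simpa [diagonalUniform] using mul_lt_of_lt_one_left (by positivity) hinv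

end DiagonalUniform


/-- There are a prior `p` and two conditional distributions `P₁`,
`P₂` on a finite product response set such that each admits a feasible stochastic
code onto its noise-independent surrogate, yet no single transition matrix is
feasible for both: the transition probabilities depend on the marginal
likelihoods. -/
theorem decorrelating_stochastic_code_depends_on_marginals :
    ∃ (nS nA nB : ℕ) (p : Fin nS → ℝ)
      (P₁ P₂ : Fin nS → Fin nA × Fin nB → ℝ),
      (∀ s, 0 ≤ p s) ∧ (∑ s, p s = 1) ∧
      (∀ s r, 0 ≤ P₁ s r) ∧ (∀ s, ∑ r, P₁ s r = 1) ∧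
      (∀ s r, 0 ≤ P₂ s r) ∧ (∀ s, ∑ r, P₂ s r = 1) ∧
      (∃ Q, feasibleNI p P₁ Q) ∧ (∃ Q, feasibleNI p P₂ Q) ∧
      ¬ ∃ Q, feasibleNI p P₁ Q ∧ feasibleNI p P₂ Q := by
  refine ⟨1, 2, 2, fun _ => 1, diagonalUniform (Fin 1) (Fin 2), pointMass (Fin 1) (0, 0),
    fun _ => zero_le_one, by simp, diagonalUniform_nonneg, sum_diagonalUniform,
    pointMass_nonneg _, sum_pointMass _, ?_, ?_, ?_⟩
  · exact ⟨_, feasibleNI_const 0 (fun _ _ => rfl) (diagonalUniform_nonneg 0)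
      (sum_diagonalUniform 0)⟩
  · exact ⟨_, feasibleNI_const 0 (fun _ _ => rfl) (pointMass_nonneg _ 0) (sum_pointMass _ 0)⟩
  · exact not_exists_feasibleNI_and_feasibleNI_pointMass (diagonalUniform_nonneg 0) one_pos
      (pNI2_diagonalUniform_lt (by simp) 0 0)
end
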